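/- arXiv:0802.3448 — 6 statements merged into one kernel-verified Lean document; each statement's English description precedes it below -/
import Mathlib

section
/- Let r₁ < r₂ < ... < r_k be the order statistics of independent exponential random variables with rates w(i₁),...,w(i_n), conditioned on the event that the items of k smallest ranks are i₁,...,i_k in this increasing order. Then the consecutive differences r₁, r₂ - r₁, ..., r_k - r_{k-1} are independent, and r_j - r_{j-1} is exponentially distributed with rate W - ∑_{ℓ<j} w(i_ℓ), where W = ∑_{ℓ=1}^n w(i_ℓ) (with r₀ := 0). -/
/-!
Two facts about exponential laws drive the proof. Memorylessness: on `{x > t}` with `t ≥ 0`,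
`x - t` is again `Exp(r)`-distributed and the event has mass `e^{-rt}`. Competing exponentials:
if `a ~ Exp(λ)` is independent of `y ~ ⊗ᵢ Exp(vᵢ)` and `V = ∑ vᵢ`, then memorylessness of `y` at
level `a`, together with `e^{-V a} Exp(λ)(da) = λ/(λ+V) · Exp(λ+V)(da)`, shows that on the event
`{a < min y}` the pair `(a, y - a)` has law `λ/(λ+V) · Exp(λ+V) ⊗ (⊗ᵢ Exp(vᵢ))`.

Peeling off the item of smallest rank in this way and inducting on `k`, the law of the ranks on the
event "items `0, …, k-1` come first, in this order", pushed forward by the gap map, is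
`(∏ⱼ wⱼ/Wⱼ) · ⊗ⱼ Exp(Wⱼ)`. Normalising by the mass of the event gives the conditional law of the
gaps, a product measure.
-/

open MeasureTheory ProbabilityTheory Set Real
open scoped ENNReal

namespace MeasureTheory.Measure

lemma pi_smul {ι : Type*} [Fintype ι] {α : ι → Type*} [∀ i, MeasurableSpace (α i)]
    (μ : ∀ i, Measure (α i)) [∀ i, IsFiniteMeasure (μ i)] (c : ι → ℝ≥0∞) (hc : ∀ i, c i ≠ ⊤) :
    Measure.pi (fun i => c i • μ i) = (∏ i, c i) • Measure.pi μ := by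
  have := fun i => (μ i).smul_finite (hc i)
  refine pi_eq fun s _ => ?_
  simp only [smul_apply, pi_pi, smul_eq_mul, Finset.prod_mul_distrib]

lemma pi_fin_succ_eq_map_cons {n : ℕ} {α : Type*} [MeasurableSpace α]
    (μ : Fin (n + 1) → Measure α) [∀ i, SigmaFinite (μ i)] :
    Measure.pi μ = ((μ 0).prod (Measure.pi fun j => μ j.succ)).map (fun p => Fin.cons p.1 p.2) := by
  rw [← (measurePreserving_piFinSuccAbove μ 0).symm.map_eq]
  congr 1
  funext p
  simp only [MeasurableEquiv.piFinSuccAbove_symm_apply, Fin.insertNthEquiv, Equiv.coe_fn_mk,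
    Fin.insertNth_zero']

end MeasureTheory.Measure

namespace ProbabilityTheory

lemma measurable_exponentialPDF (r : ℝ) : Measurable (exponentialPDF r) :=
  (measurable_exponentialPDFReal r).ennreal_ofReal

lemma ae_nonneg_expMeasure (r : ℝ) : ∀ᵐ x ∂expMeasure r, 0 ≤ x := by
  change ∀ᵐ x ∂volume.withDensity (exponentialPDF r), 0 ≤ x
  rw [ae_withDensity_iff (measurable_exponentialPDF r)]
  exact ae_of_all _ fun x hx => not_lt.1 fun hneg => hx (exponentialPDF_of_neg hneg)

lemma expMeasure_Ioc {r : ℝ} (hr : 0 < r) {a b : ℝ} (ha : 0 ≤ a) (hab : a ≤ b) :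
    expMeasure r (Ioc a b) = ENNReal.ofReal (exp (-(r * a)) - exp (-(r * b))) := by
  have := isProbabilityMeasure_expMeasure hr
  rw [← measure_cdf (expMeasure r), StieltjesFunction.measure_Ioc, cdf_expMeasure_eq hr,
    cdf_expMeasure_eq hr, if_pos (ha.trans hab), if_pos ha, sub_sub_sub_cancel_left]

lemma map_sub_restrict_Ioi_expMeasure {r t : ℝ} (hr : 0 < r) (ht : 0 ≤ t) :
    ((expMeasure r).restrict (Ioi t)).map (· - t)
      = ENNReal.ofReal (exp (-(r * t))) • expMeasure r := by
  have := isProbabilityMeasure_expMeasure hr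
  refine Measure.ext_of_Iic _ _ fun a => ?_
  have hset : (· - t) ⁻¹' Iic a ∩ Ioi t = Ioc t (a + t) := by
    ext x
    simp [and_comm]
  rw [Measure.map_apply (measurable_sub_const t) measurableSet_Iic, Measure.restrict_apply
    (measurableSet_Iic.preimage (measurable_sub_const t)), hset, Measure.smul_apply, smul_eq_mul,
    ← ofReal_cdf, cdf_expMeasure_eq hr]
  split_ifs with ha
  · rw [expMeasure_Ioc hr ht (by linarith), ← ENNReal.ofReal_mul (exp_pos _).le, mul_sub,
      mul_one, ← exp_add]
    ring_nf
  · rw [Ioc_eq_empty (by linarith), measure_empty, ENNReal.ofReal_zero, mul_zero]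

lemma map_sub_restrict_pi_expMeasure {ι : Type*} [Fintype ι] {v : ι → ℝ} (hv : ∀ i, 0 < v i)
    {t : ℝ} (ht : 0 ≤ t) :
    ((Measure.pi fun i => expMeasure (v i)).restrict {y | ∀ i, t < y i}).map (· - fun _ => t)
      = ENNReal.ofReal (exp (-((∑ i, v i) * t))) • Measure.pi fun i => expMeasure (v i) := by
  have := fun i => isProbabilityMeasure_expMeasure (hv i)
  have hbox : {y : ι → ℝ | ∀ i, t < y i} = univ.pi fun _ => Ioi t := by
    ext
    simp
  rw [hbox, Measure.restrict_pi_pi, show (· - fun _ => t) = fun (y : ι → ℝ) i => y i - t from rfl,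
    Measure.pi_map_pi fun _ => (measurable_sub_const t).aemeasurable]
  simp_rw [map_sub_restrict_Ioi_expMeasure (hv _) ht]
  rw [Measure.pi_smul _ _ fun _ => ENNReal.ofReal_ne_top,
    ← ENNReal.ofReal_prod_of_nonneg fun _ _ => (exp_pos _).le, ← exp_sum, Finset.sum_mul,
    ← Finset.sum_neg_distrib]

lemma expMeasure_withDensity_exp {r s : ℝ} (hr : 0 < r) (hs : 0 ≤ s) :
    (expMeasure r).withDensity (fun x => ENNReal.ofReal (exp (-(s * x))))
      = ENNReal.ofReal (r / (r + s)) • expMeasure (r + s) := by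
  change (volume.withDensity (exponentialPDF r)).withDensity _
    = _ • volume.withDensity (exponentialPDF (r + s))
  rw [← withDensity_mul _ (measurable_exponentialPDF r) (by fun_prop),
    ← withDensity_smul _ (measurable_exponentialPDF _)]
  congr 1
  funext x
  rcases lt_or_ge x 0 with hx | hx
  · simp [exponentialPDF_of_neg hx]
  · simp only [Pi.mul_apply, Pi.smul_apply, smul_eq_mul, exponentialPDF_of_nonneg hx]
    rw [← ENNReal.ofReal_mul (by positivity), ← ENNReal.ofReal_mul (by positivity)]
    congr 1
    field_simp
    rw [← exp_add]
    ring_nf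

lemma map_sub_restrict_lt_prod_pi_expMeasure {ι : Type*} [Fintype ι] {l : ℝ} {v : ι → ℝ}
    (hl : 0 < l) (hv : ∀ i, 0 < v i) :
    (((expMeasure l).prod (Measure.pi fun i => expMeasure (v i))).restrict
        {p | ∀ i, p.1 < p.2 i}).map (fun p => (p.1, p.2 - fun _ => p.1))
      = ENNReal.ofReal (l / (l + ∑ i, v i)) •
          (expMeasure (l + ∑ i, v i)).prod (Measure.pi fun i => expMeasure (v i)) := by
  set ν := Measure.pi fun i => expMeasure (v i)
  set shift := fun p : ℝ × (ι → ℝ) => (p.1, p.2 - fun _ => p.1)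
  have := fun i => isProbabilityMeasure_expMeasure (hv i)
  have := isProbabilityMeasure_expMeasure hl
  have hT : MeasurableSet {p : ℝ × (ι → ℝ) | ∀ i, p.1 < p.2 i} :=
    measurableSet_setOfPred.2 (by fun_prop)
  have hshift : Measurable shift := by fun_prop
  rw [← Measure.prod_smul_left,
    ← expMeasure_withDensity_exp hl (Finset.sum_nonneg fun i _ => (hv i).le)]
  refine (Measure.prod_eq fun B C hB hC => ?_).symm
  rw [Measure.map_apply hshift (hB.prod hC), Measure.restrict_apply (hshift (hB.prod hC)),
    Measure.prod_apply ((hshift (hB.prod hC)).inter hT), withDensity_apply _ hB,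
    ← lintegral_mul_const _ (by fun_prop), ← lintegral_indicator hB]
  refine lintegral_congr_ae ((ae_nonneg_expMeasure l).mono fun a ha => ?_)
  by_cases haB : a ∈ B
  · have hslice : Prod.mk a ⁻¹' (shift ⁻¹' B ×ˢ C ∩ {p | ∀ i, p.1 < p.2 i})
        = (· - fun _ => a) ⁻¹' C ∩ {y | ∀ i, a < y i} := by
      ext y
      simp [shift, haB]
    dsimp only
    rw [hslice, indicator_of_mem haB, ← Measure.restrict_apply (hC.preimage (by fun_prop)),
      ← Measure.map_apply (by fun_prop) hC, map_sub_restrict_pi_expMeasure hv ha]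
    rfl
  · rw [indicator_of_notMem haB]
    convert measure_empty (μ := ν)
    ext y
    simp [shift, haB]

lemma cond_map_eq_of_restrict_map_eq_smul {Ω β : Type*} [MeasurableSpace Ω] [MeasurableSpace β]
    {μ : Measure Ω} [IsFiniteMeasure μ] {A : Set Ω} {f : Ω → β} (hf : Measurable f)
    {ν : Measure β} [IsProbabilityMeasure ν] {c : ℝ≥0∞} (hc : c ≠ 0)
    (h : (μ.restrict A).map f = c • ν) :
    (μ[|A]).map f = ν := by
  have hμA : μ A = c := by
    simpa [Measure.map_apply hf MeasurableSet.univ] using congrArg (· univ) h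
  rw [cond, Measure.map_smul, h, smul_smul, ← hμA,
    ENNReal.inv_mul_cancel (hμA ▸ hc) (measure_ne_top μ A), one_smul]

lemma iIndepFun_and_map_eq_of_map_eq_pi {Ω ι : Type*} [MeasurableSpace Ω] [Fintype ι]
    {β : ι → Type*} [∀ i, MeasurableSpace (β i)] {μ : Measure Ω} [IsProbabilityMeasure μ]
    {X : ∀ i, Ω → β i} (hX : ∀ i, Measurable (X i)) {ν : ∀ i, Measure (β i)}
    [∀ i, IsProbabilityMeasure (ν i)] (h : μ.map (fun ω i => X i ω) = Measure.pi ν) :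
    iIndepFun X μ ∧ ∀ i, μ.map (X i) = ν i := by
  have hmarginal : ∀ i, μ.map (X i) = ν i := fun i => by
    rw [← (measurePreserving_eval ν i).map_eq, ← h,
      Measure.map_map (measurable_pi_apply i) (measurable_pi_lambda _ hX)]
    rfl
  refine ⟨?_, hmarginal⟩
  rw [iIndepFun_iff_map_fun_eq_pi_map fun i => (hX i).aemeasurable, h]
  simp_rw [hmarginal]

end ProbabilityTheory

section RankGaps

variable {m : ℕ}

/-- `x 0 < x 1 < ⋯ < x (k-1)` are the `k` smallest coordinates of `x`. -/
def firstInOrder (k : ℕ) : Set (Fin m → ℝ) :=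
  {x | ∀ a b : Fin m, a < b → (a : ℕ) < k → x a < x b}

def gaps {k : ℕ} (hkm : k ≤ m) (x : Fin m → ℝ) (j : Fin k) : ℝ :=
  x ⟨j, lt_of_lt_of_le j.2 hkm⟩ -
    if (j : ℕ) = 0 then 0 else x ⟨(j : ℕ) - 1, (Nat.sub_le _ _).trans_lt (j.2.trans_le hkm)⟩

def remainingRate (w : Fin m → ℝ) (j : ℕ) : ℝ :=
  ∑ ℓ, w ℓ - ∑ ℓ ∈ Finset.univ.filter (fun ℓ : Fin m => (ℓ : ℕ) < j), w ℓ

lemma measurableSet_firstInOrder (k : ℕ) : MeasurableSet (firstInOrder (m := m) k) :=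
  measurableSet_setOfPred.2 (by fun_prop)

lemma measurable_gaps {k : ℕ} (hkm : k ≤ m) : Measurable (gaps hkm) := by
  refine measurable_pi_lambda _ fun j => ?_
  unfold gaps
  split_ifs <;> fun_prop

lemma cons_mem_firstInOrder_succ {k : ℕ} {a : ℝ} {y : Fin m → ℝ} :
    Fin.cons a y ∈ firstInOrder (m := m + 1) (k + 1) ↔
      (∀ i, a < y i) ∧ (y - fun _ => a) ∈ firstInOrder k := by
  simp only [firstInOrder, mem_ofPred_eq, Fin.forall_fin_succ, Pi.sub_apply, sub_lt_sub_iff_right,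
    Fin.cons_zero, Fin.cons_succ, Fin.succ_lt_succ_iff, Fin.val_succ, Fin.succ_pos, Fin.val_zero,
    Fin.not_lt_zero, Nat.succ_lt_succ_iff, Nat.zero_lt_succ, forall_const, IsEmpty.forall_iff,
    true_and]

lemma gaps_cons {k : ℕ} (hkm : k + 1 ≤ m + 1) (a : ℝ) (y : Fin m → ℝ) :
    gaps hkm (Fin.cons a y : Fin (m + 1) → ℝ)
      = Fin.cons a (gaps (Nat.le_of_succ_le_succ hkm) (y - fun _ => a)) := by
  have hcons : ∀ (i : ℕ) (hi : i + 1 < m + 1),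
      (Fin.cons a y : Fin (m + 1) → ℝ) ⟨i + 1, hi⟩ = y ⟨i, by omega⟩ :=
    fun i _ => Fin.cons_succ (α := fun _ => ℝ) a y ⟨i, by omega⟩
  funext j
  refine Fin.cases (by simp [gaps]) (fun j => ?_) j
  rcases Nat.eq_zero_or_pos (j : ℕ) with hj | hj
  · simp [gaps, hj, hcons]
  · obtain ⟨i, hi⟩ : ∃ i, (j : ℕ) = i + 1 := ⟨(j : ℕ) - 1, by omega⟩
    simp [gaps, hi, hcons]

lemma remainingRate_zero (w : Fin m → ℝ) : remainingRate w 0 = ∑ ℓ, w ℓ := by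
  simp [remainingRate]

lemma remainingRate_succ (w : Fin (m + 1) → ℝ) (j : ℕ) :
    remainingRate w (j + 1) = remainingRate (fun i => w i.succ) j := by
  simp only [remainingRate, Finset.sum_filter, Fin.sum_univ_succ, Fin.val_zero, Fin.val_succ,
    Nat.zero_lt_succ, if_true, Nat.succ_lt_succ_iff]
  ring

lemma remainingRate_pos {w : Fin m → ℝ} (hw : ∀ i, 0 < w i) {j : ℕ} (hj : j < m) :
    0 < remainingRate w j := by
  rw [remainingRate, ← Finset.sum_sdiff_eq_sub (Finset.subset_univ _)]
  exact Finset.sum_pos (fun i _ => hw i) ⟨⟨j, hj⟩, by simp⟩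

lemma map_gaps_restrict_firstInOrder_succ {w : Fin (m + 1) → ℝ} (hw : ∀ i, 0 < w i) {k : ℕ}
    (hkm : k + 1 ≤ m + 1) :
    ((Measure.pi fun i => expMeasure (w i)).restrict (firstInOrder (k + 1))).map (gaps hkm)
      = ENNReal.ofReal (w 0 / (w 0 + ∑ i : Fin m, w i.succ)) •
          ((expMeasure (w 0 + ∑ i : Fin m, w i.succ)).prod
            (((Measure.pi fun i : Fin m => expMeasure (w i.succ)).restrict (firstInOrder k)).map
              (gaps (Nat.le_of_succ_le_succ hkm)))).map
            (fun p => (Fin.cons p.1 p.2 : Fin (k + 1) → ℝ)) := by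
  have hkm' : k ≤ m := Nat.le_of_succ_le_succ hkm
  have := fun i => isProbabilityMeasure_expMeasure (hw i)
  have : IsProbabilityMeasure (expMeasure (w 0 + ∑ i : Fin m, w i.succ)) :=
    isProbabilityMeasure_expMeasure
      (add_pos_of_pos_of_nonneg (hw 0) (Finset.sum_nonneg fun i _ => (hw i.succ).le))
  set ν := Measure.pi fun i : Fin m => expMeasure (w i.succ)
  set cons := fun p : ℝ × (Fin m → ℝ) => (Fin.cons p.1 p.2 : Fin (m + 1) → ℝ)
  set cons' := fun p : ℝ × (Fin k → ℝ) => (Fin.cons p.1 p.2 : Fin (k + 1) → ℝ)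
  set shift := fun p : ℝ × (Fin m → ℝ) => (p.1, p.2 - fun _ => p.1)
  have hcons : Measurable cons := by fun_prop
  have hcons' : Measurable cons' := by fun_prop
  have hshift : Measurable shift := by fun_prop
  have hF := measurableSet_firstInOrder (m := m) k
  have hpre : cons ⁻¹' firstInOrder (k + 1) =
      shift ⁻¹' (univ ×ˢ firstInOrder k) ∩ {p | ∀ i, p.1 < p.2 i} := by
    ext p
    simp [cons, shift, cons_mem_firstInOrder_succ, and_comm]
  have hmin : (((expMeasure (w 0)).prod ν).restrict {p | ∀ i, p.1 < p.2 i}).map shift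
      = ENNReal.ofReal (w 0 / (w 0 + ∑ i : Fin m, w i.succ)) •
          (expMeasure (w 0 + ∑ i : Fin m, w i.succ)).prod ν :=
    map_sub_restrict_lt_prod_pi_expMeasure (hw 0) fun i => hw i.succ
  have hgaps : gaps hkm ∘ cons = (cons' ∘ Prod.map id (gaps hkm')) ∘ shift :=
    funext fun p => gaps_cons hkm p.1 p.2
  rw [Measure.pi_fin_succ_eq_map_cons, Measure.restrict_map hcons (measurableSet_firstInOrder _),
    hpre, ← Measure.restrict_restrict (hshift (MeasurableSet.univ.prod hF)),
    Measure.map_map (measurable_gaps hkm) hcons, hgaps,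
    ← Measure.map_map (hcons'.comp (measurable_id.prodMap (measurable_gaps hkm'))) hshift,
    ← Measure.restrict_map hshift (MeasurableSet.univ.prod hF), hmin, Measure.restrict_smul,
    ← Measure.prod_restrict, Measure.restrict_univ, Measure.map_smul,
    ← Measure.map_map hcons' (measurable_id.prodMap (measurable_gaps hkm')),
    ← Measure.map_prod_map _ _ measurable_id (measurable_gaps hkm'), Measure.map_id]

lemma map_gaps_restrict_firstInOrder {w : Fin m → ℝ} (hw : ∀ i, 0 < w i) {k : ℕ} (hkm : k ≤ m) :
    ((Measure.pi fun i => expMeasure (w i)).restrict (firstInOrder k)).map (gaps hkm)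
      = ENNReal.ofReal (∏ j : Fin k, w (Fin.castLE hkm j) / remainingRate w j) •
          Measure.pi fun j : Fin k => expMeasure (remainingRate w j) := by
  induction k generalizing m with
  | zero =>
    have huniv : firstInOrder (m := m) 0 = univ := by
      ext x
      simp [firstInOrder]
    have := fun i => isProbabilityMeasure_expMeasure (hw i)
    have := Measure.isProbabilityMeasure_map
      (μ := Measure.pi fun i => expMeasure (w i)) (measurable_gaps hkm).aemeasurable
    have : ∀ j : Fin 0, SigmaFinite (expMeasure (remainingRate w j)) := fun j => j.elim0
    rw [huniv, Measure.restrict_univ, Fin.prod_univ_zero, ENNReal.ofReal_one, one_smul]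
    refine (Measure.pi_eq fun s _ => ?_).symm
    rw [show univ.pi s = univ by ext; simp, measure_univ, Fin.prod_univ_zero]
  | succ k ih =>
    obtain ⟨m, rfl⟩ : ∃ m', m = m' + 1 := ⟨m - 1, by omega⟩
    have hW : 0 < w 0 + ∑ i : Fin m, w i.succ :=
      add_pos_of_pos_of_nonneg (hw 0) (Finset.sum_nonneg fun i _ => (hw i.succ).le)
    have := isProbabilityMeasure_expMeasure hW
    have := fun j : Fin k => isProbabilityMeasure_expMeasure
      (remainingRate_pos (fun i : Fin m => hw i.succ) (j.2.trans_le (Nat.le_of_succ_le_succ hkm)))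
    have := fun j : Fin (k + 1) => isProbabilityMeasure_expMeasure
      (remainingRate_pos hw (j.2.trans_le hkm))
    rw [map_gaps_restrict_firstInOrder_succ hw hkm, ih (fun i => hw i.succ),
      Measure.prod_smul_right, Measure.map_smul, smul_smul, Measure.pi_fin_succ_eq_map_cons]
    simp only [Fin.prod_univ_succ, Fin.val_zero, Fin.val_succ, remainingRate_zero,
      remainingRate_succ, Fin.sum_univ_succ]
    rw [← ENNReal.ofReal_mul (div_pos (hw 0) hW).le]
    rfl

end RankGaps

/-- Conditioned on the event that the `k` items of smallest rank are `0, 1, ..., k-1`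
(in increasing rank order), the consecutive rank differences
`r 0, r 1 - r 0, ..., r (k-1) - r (k-2)` are independent, and the `j`-th difference is
exponentially distributed with rate `W - ∑_{ℓ < j} w ℓ`, where `W = ∑ ℓ, w ℓ`. -/
theorem rank_differences_exponential {Ω : Type*} [MeasureSpace Ω]
    [IsProbabilityMeasure (ℙ : Measure Ω)]
    (n k : ℕ) (hkn : k ≤ n) (w : Fin n → ℝ) (hw : ∀ i, 0 < w i)
    (r : Fin n → Ω → ℝ) (hmeas : ∀ i, Measurable (r i))
    (hindep : iIndepFun r ℙ)
    (hlaw : ∀ i, Measure.map (r i) ℙ = expMeasure (w i))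
    (A : Set Ω)
    (hA : A = {ω | ∀ a b : Fin n, a < b → (a : ℕ) < k → r a ω < r b ω})
    (D : Fin k → Ω → ℝ)
    (hD : ∀ (j : Fin k) (ω : Ω),
      D j ω = r ⟨(j : ℕ), lt_of_lt_of_le j.2 hkn⟩ ω -
        (if h : (j : ℕ) = 0 then 0 else r ⟨(j : ℕ) - 1, by omega⟩ ω)) :
    iIndepFun D (ℙ[|A]) ∧
      ∀ j : Fin k,
        Measure.map (D j) (ℙ[|A])
          = expMeasure ((∑ ℓ, w ℓ) - ∑ ℓ ∈ Finset.univ.filter (fun ℓ : Fin n => (ℓ : ℕ) < (j : ℕ)), w ℓ) := by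
  set R : Ω → Fin n → ℝ := fun ω i => r i ω
  have hR : Measurable R := measurable_pi_lambda _ hmeas
  have hlawR : Measure.map R ℙ = Measure.pi fun i => expMeasure (w i) := by
    rw [(iIndepFun_iff_map_fun_eq_pi_map fun i => (hmeas i).aemeasurable).1 hindep]
    simp_rw [hlaw]
  have hDR : (fun ω j => D j ω) = gaps hkn ∘ R := funext fun ω => funext fun j => hD j ω
  have hDmeas : Measurable fun ω j => D j ω := hDR ▸ (measurable_gaps hkn).comp hR
  have hrestrict : ((ℙ : Measure Ω).restrict A).map (fun ω j => D j ω)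
      = ENNReal.ofReal (∏ j : Fin k, w (Fin.castLE hkn j) / remainingRate w j) •
          Measure.pi fun j : Fin k => expMeasure (remainingRate w j) := by
    rw [hDR, ← Measure.map_map (measurable_gaps hkn) hR, show A = R ⁻¹' firstInOrder k from hA,
      ← Measure.restrict_map hR (measurableSet_firstInOrder k), hlawR,
      map_gaps_restrict_firstInOrder hw hkn]
  have hrate : ∀ j : Fin k, 0 < remainingRate w j :=
    fun j => remainingRate_pos hw (j.2.trans_le hkn)
  have := fun j => isProbabilityMeasure_expMeasure (hrate j)
  have hcond := cond_map_eq_of_restrict_map_eq_smul hDmeas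
    (ENNReal.ofReal_pos.2 (Finset.prod_pos fun j _ => div_pos (hw _) (hrate j))).ne' hrestrict
  have : IsProbabilityMeasure (ℙ[|A]) := by
    have : IsProbabilityMeasure (Measure.map (fun ω j => D j ω) ℙ[|A]) := hcond ▸ inferInstance
    exact Measure.isProbabilityMeasure_of_map (fun ω j => D j ω)
  exact iIndepFun_and_map_eq_of_map_eq_pi (ν := fun j => expMeasure (remainingRate w j))
    (fun j => (measurable_pi_apply j).comp hDmeas) hcond
end

section
/- Refining a partition cannot decrease variance in HTp: if one measurable partition of the sample space is a refinement of another, and adjusted weights a_fine(i) and a_coarse(i) are defined for item i by the HTp rule (w(i) divided by the conditional inclusion probability of i in the part containing the outcome, and 0 when i is not included), then on each coarse part the coarse adjusted weight equals the conditional expectation of the fine adjusted weight given inclusion-pattern information, and consequently Var(a_coarse(i)) ≤ Var(a_fine(i)). -/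
open MeasureTheory ProbabilityTheory Set Function

/-! The coarse weight is the conditional expectation of the fine weight given the partition of
`A` into the pieces `A ∩ C ℓ`: it is constant on each piece, has the same integral there
(both equal `w ℙ(C ℓ)`, the fine one by summing over the fine parts of `C ℓ`), and agrees with
the fine weight (namely `0`) off `A`. Hence `a_fine - a_coarse` is orthogonal to `a_coarse` and
to the constants, and `Var a_fine = Var a_coarse + Var (a_fine - a_coarse)`. -/

section Variance

variable {Ω ι : Type*} [MeasurableSpace Ω] {μ : Measure Ω}

lemma variance_le_of_covariance_sub_eq_zero [IsFiniteMeasure μ] {f g : Ω → ℝ}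
    (hf : MemLp f 2 μ) (hg : MemLp g 2 μ) (h : cov[g, f - g; μ] = 0) :
    Var[g; μ] ≤ Var[f; μ] := by
  have hsum := variance_add hg (hf.sub hg)
  rw [add_sub_cancel, h, mul_zero, add_zero] at hsum
  rw [hsum]
  exact le_add_of_nonneg_right (variance_nonneg _ _)

lemma integral_mul_eq_zero_of_setIntegral_eq_zero [Countable ι] {Q : ι → Set Ω}
    (hQmeas : ∀ i, MeasurableSet (Q i)) (hQdisj : Pairwise (Disjoint on Q)) {g h : Ω → ℝ}
    (hgh : Integrable (fun ω ↦ g ω * h ω) μ)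
    (hg : ∀ i, ∃ k, ∀ ω ∈ Q i, g ω = k) (hQh : ∀ i, ∫ ω in Q i, h ω ∂μ = 0)
    (hout : ∀ ω ∉ ⋃ i, Q i, h ω = 0) :
    ∫ ω, g ω * h ω ∂μ = 0 := by
  have hpiece : ∀ i, ∫ ω in Q i, g ω * h ω ∂μ = 0 := fun i ↦ by
    obtain ⟨k, hk⟩ := hg i
    rw [setIntegral_congr_fun (hQmeas i) (g := fun ω ↦ k * h ω) fun ω hω ↦ by rw [hk ω hω],
      integral_const_mul, hQh i, mul_zero]
  rw [← setIntegral_eq_integral_of_forall_compl_eq_zero fun ω hω ↦ by rw [hout ω hω, mul_zero],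
    integral_iUnion hQmeas hQdisj hgh.integrableOn]
  simp [hpiece]

lemma variance_le_of_setIntegral_eq [IsProbabilityMeasure μ] [Countable ι] {Q : ι → Set Ω}
    (hQmeas : ∀ i, MeasurableSet (Q i)) (hQdisj : Pairwise (Disjoint on Q)) {f g : Ω → ℝ}
    (hf : MemLp f 2 μ) (hg : MemLp g 2 μ) (hconst : ∀ i, ∃ k, ∀ ω ∈ Q i, g ω = k)
    (hQ : ∀ i, ∫ ω in Q i, f ω ∂μ = ∫ ω in Q i, g ω ∂μ) (hout : ∀ ω ∉ ⋃ i, Q i, f ω = g ω) :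
    Var[g; μ] ≤ Var[f; μ] := by
  have hfg := hf.sub hg
  have hQfg : ∀ i, ∫ ω in Q i, (f - g) ω ∂μ = 0 := fun i ↦ by
    rw [Pi.sub_def, integral_sub (hf.integrable one_le_two).integrableOn
      (hg.integrable one_le_two).integrableOn, hQ i, sub_self]
  have hout_sub : ∀ ω ∉ ⋃ i, Q i, (f - g) ω = 0 := fun ω hω ↦ sub_eq_zero.2 (hout ω hω)
  have hmean : μ[f - g] = 0 := by
    simpa using integral_mul_eq_zero_of_setIntegral_eq_zero hQmeas hQdisj (g := fun _ ↦ 1)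
      ((hfg.integrable one_le_two).const_mul 1)
      (fun _ ↦ ⟨1, fun _ _ ↦ rfl⟩) hQfg hout_sub
  have horth : μ[g * (f - g)] = 0 :=
    integral_mul_eq_zero_of_setIntegral_eq_zero hQmeas hQdisj (hg.integrable_mul hfg) hconst
      hQfg hout_sub
  refine variance_le_of_covariance_sub_eq_zero hf hg ?_
  rw [covariance_eq_sub hg hfg, horth, hmean, mul_zero, sub_zero]

end Variance

section Partition

variable {Ω ι κ : Type*}

lemma pairwise_disjoint_biUnion_fiber {P : ι → Set Ω} (hP : Pairwise (Disjoint on P))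
    (c : ι → κ) : Pairwise (Disjoint on fun ℓ ↦ ⋃ j ∈ {j | c j = ℓ}, P j) := by
  intro ℓ ℓ' hne
  simp only [Function.onFun, disjoint_iUnion₂_left, disjoint_iUnion₂_right]
  rintro j rfl j' hj'
  exact hP fun hjj' ↦ hne (hjj' ▸ hj'.symm)

variable [MeasurableSpace Ω] {μ : Measure Ω} [IsFiniteMeasure μ] {A : Set Ω} {w : ℝ}
  {a : Ω → ℝ}

lemma setIntegral_inter_eq_mul_measureReal {S : Set Ω} (hAS : MeasurableSet (A ∩ S))
    (hpos : μ (A ∩ S) ≠ 0)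
    (ha : ∀ ω ∈ A ∩ S, a ω = w * (μ S).toReal / (μ (A ∩ S)).toReal) :
    ∫ ω in A ∩ S, a ω ∂μ = w * (μ S).toReal := by
  have hpos' : (μ (A ∩ S)).toReal ≠ 0 := ENNReal.toReal_ne_zero.2 ⟨hpos, measure_ne_top _ _⟩
  rw [setIntegral_congr_fun hAS ha, setIntegral_const, smul_eq_mul, measureReal_def]
  field_simp

lemma setIntegral_inter_biUnion_eq [Countable ι] (hA : MeasurableSet A) {P : ι → Set Ω}
    (hPmeas : ∀ j, MeasurableSet (P j)) (hPdisj : Pairwise (Disjoint on P))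
    (ha : Integrable a μ) (hparts : ∀ j, ∫ ω in A ∩ P j, a ω ∂μ = w * (μ (P j)).toReal)
    (J : Set ι) :
    ∫ ω in A ∩ ⋃ j ∈ J, P j, a ω ∂μ = w * (μ (⋃ j ∈ J, P j)).toReal := by
  have hdisj : Pairwise (Disjoint on fun j : J ↦ P j) := fun j j' hne ↦
    hPdisj (Subtype.coe_injective.ne hne)
  rw [inter_iUnion₂, biUnion_eq_iUnion, biUnion_eq_iUnion,
    integral_iUnion (fun j : J ↦ hA.inter (hPmeas j))
      (fun j j' hne ↦ (hdisj hne).mono inter_subset_right inter_subset_right) ha.integrableOn,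
    measure_iUnion hdisj fun j ↦ hPmeas j,
    ENNReal.tsum_toReal_eq fun _ ↦ measure_ne_top _ _, ← tsum_mul_left]
  exact tsum_congr fun j ↦ hparts j

end Partition

theorem htp_coarse_variance_le_general {Ω : Type*} [MeasureSpace Ω]
    [IsProbabilityMeasure (ℙ : Measure Ω)]
    (w : ℝ) (P : ℕ → Set Ω)
    (hPmeas : ∀ j, MeasurableSet (P j)) (hPdisj : Pairwise (Function.onFun Disjoint P))
    (hPcover : (⋃ j, P j) = Set.univ)
    (c : ℕ → ℕ) (C : ℕ → Set Ω) (hC : ∀ ℓ, C ℓ = ⋃ j ∈ {j | c j = ℓ}, P j)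
    (A : Set Ω) (hA : MeasurableSet A) (hApos : ∀ j, 0 < ℙ (A ∩ P j))
    (afine acoarse : Ω → ℝ)
    (hfineA : ∀ j, ∀ ω ∈ A ∩ P j,
      afine ω = w * (ℙ (P j)).toReal / (ℙ (A ∩ P j)).toReal)
    (hfine0 : ∀ ω, ω ∉ A → afine ω = 0)
    (hcoarseA : ∀ ℓ, ∀ ω ∈ A ∩ C ℓ,
      acoarse ω = w * (ℙ (C ℓ)).toReal / (ℙ (A ∩ C ℓ)).toReal)
    (hcoarse0 : ∀ ω, ω ∉ A → acoarse ω = 0)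
    (hfineL2 : MemLp afine 2 ℙ) (hcoarseL2 : MemLp acoarse 2 ℙ) :
    variance acoarse ℙ ≤ variance afine ℙ := by
  have hCmeas : ∀ ℓ, MeasurableSet (C ℓ) := fun ℓ ↦
    hC ℓ ▸ MeasurableSet.biUnion (to_countable _) fun j _ ↦ hPmeas j
  have hCdisj : Pairwise (Disjoint on C) := funext hC ▸ pairwise_disjoint_biUnion_fiber hPdisj c
  have hfine : ∀ j, ∫ ω in A ∩ P j, afine ω = w * (ℙ (P j)).toReal := fun j ↦
    setIntegral_inter_eq_mul_measureReal (hA.inter (hPmeas j)) (hApos j).ne' (hfineA j)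
  refine variance_le_of_setIntegral_eq (Q := fun ℓ ↦ A ∩ C ℓ) (fun ℓ ↦ hA.inter (hCmeas ℓ))
    (fun ℓ ℓ' hne ↦ (hCdisj hne).mono inter_subset_right inter_subset_right) hfineL2 hcoarseL2
    (fun ℓ ↦ ⟨_, hcoarseA ℓ⟩) (fun ℓ ↦ ?_) (fun ω hω ↦ ?_)
  · by_cases hz : ℙ (A ∩ C ℓ) = 0
    · simp [Measure.restrict_eq_zero.2 hz]
    rw [setIntegral_inter_eq_mul_measureReal (hA.inter (hCmeas ℓ)) hz (hcoarseA ℓ), hC ℓ]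
    exact setIntegral_inter_biUnion_eq hA hPmeas hPdisj (hfineL2.integrable one_le_two) hfine _
  · have hωA : ω ∉ A := fun hωA ↦ hω <| by
      obtain ⟨j, hj⟩ := mem_iUnion.1 (hPcover ▸ mem_univ ω)
      exact mem_iUnion.2 ⟨c j, hωA, hC (c j) ▸ mem_biUnion rfl hj⟩
    rw [hfine0 ω hωA, hcoarse0 ω hωA]

/-- Coarsening the partition in HTp cannot increase variance: if the partition
`{C ℓ}` is obtained by merging parts of the partition `{P j}` (via an assignment
`c : ℕ → ℕ` with `C ℓ = ⋃_{j : c j = ℓ} P j`), and `a_fine`, `a_coarse` are the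
HTp adjusted weights of an item with weight `w` and inclusion event `A`
(equal to `w` divided by the conditional inclusion probability on the part containing
the outcome, and `0` off `A`), then `Var(a_coarse) ≤ Var(a_fine)`. -/
theorem htp_coarse_variance_le {Ω : Type*} [MeasureSpace Ω]
    [IsProbabilityMeasure (ℙ : Measure Ω)]
    (w : ℝ) (P : ℕ → Set Ω)
    (hPmeas : ∀ j, MeasurableSet (P j)) (hPdisj : Pairwise (Function.onFun Disjoint P))
    (hPcover : (⋃ j, P j) = Set.univ) (hPpos : ∀ j, 0 < ℙ (P j))
    (c : ℕ → ℕ) (C : ℕ → Set Ω) (hC : ∀ ℓ, C ℓ = ⋃ j ∈ {j | c j = ℓ}, P j)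
    (A : Set Ω) (hA : MeasurableSet A) (hApos : ∀ j, 0 < ℙ (A ∩ P j))
    (afine acoarse : Ω → ℝ)
    (hfineA : ∀ j, ∀ ω ∈ A ∩ P j,
      afine ω = w * (ℙ (P j)).toReal / (ℙ (A ∩ P j)).toReal)
    (hfine0 : ∀ ω, ω ∉ A → afine ω = 0)
    (hcoarseA : ∀ ℓ, ∀ ω ∈ A ∩ C ℓ,
      acoarse ω = w * (ℙ (C ℓ)).toReal / (ℙ (A ∩ C ℓ)).toReal)
    (hcoarse0 : ∀ ω, ω ∉ A → acoarse ω = 0)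
    (hfineL2 : MemLp afine 2 ℙ) (hcoarseL2 : MemLp acoarse 2 ℙ) :
    variance acoarse ℙ ≤ variance afine ℙ :=
  htp_coarse_variance_le_general w P hPmeas hPdisj hPcover c C hC A hA hApos afine acoarse hfineA
    hfine0 hcoarseA hcoarse0 hfineL2 hcoarseL2
end

section
/- Recurrence for the inclusion probability function: for a finite set s of items with positive weights w(i), ℓ > 0, and i ∈ s, define f(s,ℓ) = ∫₀^∞ ℓ e^{-ℓx} ∏_{j∈s}(1 - e^{-w(j)x}) dx. Then f(s,ℓ) = f(s∖{i}, ℓ) - f(s∖{i}, ℓ + w(i)) · ℓ/(ℓ + w(i)). -/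
/-! Factoring `1 - e^{-w(i)x}` out of the product splits the integrand of `f(s,ℓ)` into that of
`f(s∖{i},ℓ)` minus a multiple of that of `f(s∖{i},ℓ+w(i))`, because
`ℓ e^{-ℓx} e^{-w(i)x} = ℓ/(ℓ+w(i)) ⬝ (ℓ+w(i)) e^{-(ℓ+w(i))x}`; the integrands are dominated by
`ℓ e^{-ℓx}`, so the integral is linear on them. -/

open MeasureTheory

/-- `f s ℓ = ∫₀^∞ ℓ e^{-ℓx} ∏_{j∈s} (1 - e^{-w(j)x}) dx`. -/
noncomputable def f {ι : Type*} (w : ι → ℝ) (s : Finset ι) (ℓ : ℝ) : ℝ :=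
  ∫ x in Set.Ioi (0:ℝ), ℓ * Real.exp (-ℓ * x) * ∏ j ∈ s, (1 - Real.exp (-(w j) * x))

lemma abs_one_sub_exp_neg_mul_le_one {a x : ℝ} (ha : 0 ≤ a) (hx : 0 ≤ x) :
    |1 - Real.exp (-a * x)| ≤ 1 := by
  have hle : Real.exp (-a * x) ≤ 1 := Real.exp_le_one_iff.mpr (by nlinarith)
  rw [abs_le]
  constructor <;> linarith [Real.exp_pos (-a * x)]

lemma abs_prod_one_sub_exp_neg_mul_le_one {ι : Type*} {w : ι → ℝ} {s : Finset ι}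
    (hw : ∀ j ∈ s, 0 ≤ w j) {x : ℝ} (hx : 0 ≤ x) :
    |∏ j ∈ s, (1 - Real.exp (-(w j) * x))| ≤ 1 := by
  rw [Finset.abs_prod]
  exact Finset.prod_le_one (fun _ _ => abs_nonneg _)
    fun j hj => abs_one_sub_exp_neg_mul_le_one (hw j hj) hx

lemma integrableOn_mul_exp_neg_mul_prod_one_sub_exp {ι : Type*} {w : ι → ℝ} {s : Finset ι}
    (hw : ∀ j ∈ s, 0 ≤ w j) {ℓ : ℝ} (hℓ : 0 < ℓ) :
    IntegrableOn (fun x => ℓ * Real.exp (-ℓ * x) * ∏ j ∈ s, (1 - Real.exp (-(w j) * x)))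
      (Set.Ioi 0) := by
  refine ((exp_neg_integrableOn_Ioi 0 hℓ).const_mul ℓ).mono'
    (Continuous.aestronglyMeasurable (by fun_prop)) ?_
  filter_upwards [ae_restrict_mem measurableSet_Ioi] with x (hx : 0 < x)
  rw [Real.norm_eq_abs, abs_mul, abs_of_pos (by positivity : 0 < ℓ * Real.exp (-ℓ * x))]
  exact mul_le_of_le_one_right (by positivity) (abs_prod_one_sub_exp_neg_mul_le_one hw hx.le)

lemma mul_exp_neg_mul_prod_one_sub_exp_eq {ι : Type*} [DecidableEq ι] (w : ι → ℝ)
    {s : Finset ι} {i : ι} (hi : i ∈ s) {ℓ : ℝ} (hℓi : ℓ + w i ≠ 0) (x : ℝ) :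
    ℓ * Real.exp (-ℓ * x) * ∏ j ∈ s, (1 - Real.exp (-(w j) * x))
      = ℓ * Real.exp (-ℓ * x) * ∏ j ∈ s.erase i, (1 - Real.exp (-(w j) * x))
        - ℓ / (ℓ + w i) * ((ℓ + w i) * Real.exp (-(ℓ + w i) * x) *
            ∏ j ∈ s.erase i, (1 - Real.exp (-(w j) * x))) := by
  have hexp : Real.exp (-(ℓ + w i) * x) = Real.exp (-ℓ * x) * Real.exp (-(w i) * x) := by
    rw [← Real.exp_add]; ring_nf
  rw [← Finset.mul_prod_erase s _ hi, hexp]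
  field_simp

/-- Recurrence: `f(s,ℓ) = f(s∖{i},ℓ) - f(s∖{i}, ℓ+w(i)) ⬝ ℓ/(ℓ+w(i))`. -/
theorem f_recurrence {ι : Type*} [DecidableEq ι] (w : ι → ℝ) (s : Finset ι)
    (hw : ∀ j ∈ s, 0 < w j) (ℓ : ℝ) (hℓ : 0 < ℓ) (i : ι) (hi : i ∈ s) :
    f w s ℓ = f w (s.erase i) ℓ - f w (s.erase i) (ℓ + w i) * (ℓ / (ℓ + w i)) := by
  have hℓi : 0 < ℓ + w i := add_pos hℓ (hw i hi)
  have hwi : ∀ j ∈ s.erase i, 0 ≤ w j := fun j hj => (hw j (Finset.mem_of_mem_erase hj)).le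
  unfold f
  simp_rw [mul_exp_neg_mul_prod_one_sub_exp_eq w hi hℓi.ne']
  rw [integral_sub (integrableOn_mul_exp_neg_mul_prod_one_sub_exp hwi hℓ)
      ((integrableOn_mul_exp_neg_mul_prod_one_sub_exp hwi hℓi).const_mul _),
    integral_const_mul, mul_comm (ℓ / (ℓ + w i))]
end

section
/- Log-supermodularity inequality for f: for a finite set c of items with positive weights, an item i ∉ c with weight w(i) > 0, and 0 < ℓ ≤ ℓ', where f(s,ℓ) = ∫₀^∞ ℓ e^{-ℓx} ∏_{j∈s}(1 - e^{-w(j)x}) dx, it holds that f(c, ℓ) · f(c∪{i}, ℓ') ≤ f(c, ℓ') · f(c∪{i}, ℓ). -/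
/-!
Write `f(s, ℓ) = ℓ ∫₀^∞ e^{-ℓx} P_s(x) dx` with `P_s(x) = ∏_{j ∈ s} (1 - e^{-w(j)x})`, so that
`P_{c ∪ {i}} = P_c ⋅ g` with `g(x) = 1 - e^{-w(i)x}` increasing. The claim is then a Chebyshev-type
correlation inequality `∫ φ ⋅ ∫ ψ g ≤ ∫ ψ ⋅ ∫ φ g` for `φ = e^{-ℓx} P_c`, `ψ = e^{-ℓ'x} P_c`,
whose ratio `ψ/φ = e^{-(ℓ'-ℓ)x}` is decreasing. Writing both sides as integrals over the square and
symmetrizing, the difference of the integrands is `(g(y) - g(x)) (ψ(x) φ(y) - φ(x) ψ(y)) ≥ 0`.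
-/

open MeasureTheory

open Set Real

section Correlation

variable {α : Type*} [MeasurableSpace α] {μ : Measure α}

theorem MeasureTheory.Integrable.mul_prod_add_swap {p q : α → ℝ} (hp : Integrable p μ)
    (hq : Integrable q μ) :
    Integrable (fun z : α × α => p z.1 * q z.2 + p z.2 * q z.1) (μ.prod μ) :=
  (hp.mul_prod hq).add (by simpa only [mul_comm] using hq.mul_prod hp)

variable [SFinite μ]

theorem integral_prod_mul_add_swap {p q : α → ℝ} (hp : Integrable p μ) (hq : Integrable q μ) :
    ∫ z, (p z.1 * q z.2 + p z.2 * q z.1) ∂μ.prod μ = 2 * ((∫ x, p x ∂μ) * ∫ x, q x ∂μ) := by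
  have hswap : (fun z : α × α => p z.2 * q z.1) = fun z => q z.1 * p z.2 := by
    funext z; ring
  rw [integral_add (hp.mul_prod hq) (hswap ▸ hq.mul_prod hp), hswap, integral_prod_mul,
    integral_prod_mul]
  ring

theorem integral_mul_integral_le_of_ae_symm {p q r s : α → ℝ}
    (hp : Integrable p μ) (hq : Integrable q μ) (hr : Integrable r μ) (hs : Integrable s μ)
    (h : ∀ᵐ z ∂μ.prod μ, p z.1 * q z.2 + p z.2 * q z.1 ≤ r z.1 * s z.2 + r z.2 * s z.1) :
    (∫ x, p x ∂μ) * (∫ x, q x ∂μ) ≤ (∫ x, r x ∂μ) * (∫ x, s x ∂μ) := by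
  have := integral_mono_ae (hp.mul_prod_add_swap hq) (hr.mul_prod_add_swap hs) h
  rw [integral_prod_mul_add_swap hp hq, integral_prod_mul_add_swap hr hs] at this
  linarith

/-- The hypothesis on `φ, ψ` says that `ψ / φ` is antitone on `s`, without dividing. -/
theorem integral_mul_integral_mul_le_of_monotoneOn [LinearOrder α] {s : Set α}
    (hs : MeasurableSet s) {φ ψ g : α → ℝ} (hφ : IntegrableOn φ s μ) (hψ : IntegrableOn ψ s μ)
    (hφg : IntegrableOn (fun x => φ x * g x) s μ) (hψg : IntegrableOn (fun x => ψ x * g x) s μ)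
    (hg : MonotoneOn g s) (hφψ : ∀ x ∈ s, ∀ y ∈ s, x ≤ y → φ x * ψ y ≤ φ y * ψ x) :
    (∫ x in s, φ x ∂μ) * (∫ x in s, ψ x * g x ∂μ) ≤
      (∫ x in s, ψ x ∂μ) * (∫ x in s, φ x * g x ∂μ) := by
  have ordered : ∀ x ∈ s, ∀ y ∈ s, x ≤ y →
      φ x * (ψ y * g y) + φ y * (ψ x * g x) ≤ ψ x * (φ y * g y) + ψ y * (φ x * g x) := by
    intro x hx y hy hxy
    have key : 0 ≤ (g y - g x) * (φ y * ψ x - φ x * ψ y) :=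
      mul_nonneg (sub_nonneg.2 (hg hx hy hxy)) (sub_nonneg.2 (hφψ x hx y hy hxy))
    linarith
  refine integral_mul_integral_le_of_ae_symm hφ hψg hψ hφg ?_
  rw [Measure.prod_restrict]
  filter_upwards [ae_restrict_mem (hs.prod hs)] with z ⟨hz₁, hz₂⟩
  rcases le_total z.1 z.2 with h | h
  · exact ordered _ hz₁ _ hz₂ h
  · linarith [ordered _ hz₂ _ hz₁ h]

end Correlation

/-- The distribution function of the maximum of independent exponential variables with
rates `w j`, `j ∈ s`. -/
noncomputable def maxExpCdf {ι : Type*} (w : ι → ℝ) (s : Finset ι) (x : ℝ) : ℝ :=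
  ∏ j ∈ s, (1 - exp (-(w j) * x))

section MaxExpCdf

variable {ι : Type*} {w : ι → ℝ} {s : Finset ι}

theorem one_sub_exp_neg_mul_mem_Icc {a x : ℝ} (ha : 0 ≤ a) (hx : 0 ≤ x) :
    1 - exp (-a * x) ∈ Icc (0 : ℝ) 1 :=
  ⟨sub_nonneg.2 (exp_le_one_iff.2 (by nlinarith)), sub_le_self _ (exp_pos _).le⟩

theorem maxExpCdf_mem_Icc (hw : ∀ j ∈ s, 0 ≤ w j) {x : ℝ} (hx : 0 ≤ x) :
    maxExpCdf w s x ∈ Icc (0 : ℝ) 1 :=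
  ⟨Finset.prod_nonneg fun j hj => (one_sub_exp_neg_mul_mem_Icc (hw j hj) hx).1,
    Finset.prod_le_one (fun j hj => (one_sub_exp_neg_mul_mem_Icc (hw j hj) hx).1)
      fun j hj => (one_sub_exp_neg_mul_mem_Icc (hw j hj) hx).2⟩

theorem continuous_maxExpCdf : Continuous (maxExpCdf w s) :=
  continuous_finsetProd _ fun _ _ => by fun_prop

theorem maxExpCdf_insert [DecidableEq ι] {i : ι} (hi : i ∉ s) (x : ℝ) :
    maxExpCdf w (insert i s) x = maxExpCdf w s x * (1 - exp (-(w i) * x)) := by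
  rw [maxExpCdf, Finset.prod_insert hi, mul_comm, maxExpCdf]

theorem integrableOn_exp_neg_mul_maxExpCdf (hw : ∀ j ∈ s, 0 ≤ w j) {ℓ : ℝ} (hℓ : 0 < ℓ) :
    IntegrableOn (fun x => exp (-ℓ * x) * maxExpCdf w s x) (Ioi 0) := by
  refine (exp_neg_integrableOn_Ioi 0 hℓ).mul_bdd continuous_maxExpCdf.aestronglyMeasurable
    (c := 1) ?_
  filter_upwards [ae_restrict_mem measurableSet_Ioi] with x hx
  obtain ⟨h₀, h₁⟩ := maxExpCdf_mem_Icc hw (le_of_lt hx)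
  rwa [Real.norm_of_nonneg h₀]

theorem f_eq_mul_integral (ℓ : ℝ) :
    f w s ℓ = ℓ * ∫ x in Ioi 0, exp (-ℓ * x) * maxExpCdf w s x := by
  simp only [f, maxExpCdf, mul_assoc, integral_const_mul]

end MaxExpCdf

theorem exp_neg_mul_mul_exp_neg_mul_le {a b x y : ℝ} (hab : a ≤ b) (hxy : x ≤ y) :
    exp (-a * x) * exp (-b * y) ≤ exp (-a * y) * exp (-b * x) := by
  rw [← exp_add, ← exp_add, exp_le_exp]
  nlinarith

/-- Log-supermodularity: for `i ∉ c` and `0 < ℓ ≤ ℓ'`,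
`f(c,ℓ) ⬝ f(c∪{i},ℓ') ≤ f(c,ℓ') ⬝ f(c∪{i},ℓ)`. -/
theorem f_log_supermodular {ι : Type*} [DecidableEq ι] (w : ι → ℝ) (c : Finset ι)
    (hw : ∀ j ∈ c, 0 < w j) (i : ι) (hi : i ∉ c) (hwi : 0 < w i)
    (ℓ ℓ' : ℝ) (hℓ : 0 < ℓ) (hℓℓ' : ℓ ≤ ℓ') :
    f w c ℓ * f w (insert i c) ℓ' ≤ f w c ℓ' * f w (insert i c) ℓ := by
  have hℓ' : 0 < ℓ' := hℓ.trans_le hℓℓ'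
  have hc : ∀ j ∈ c, 0 ≤ w j := fun j hj => (hw j hj).le
  have hic : ∀ j ∈ insert i c, 0 ≤ w j := Finset.forall_mem_insert .. |>.2 ⟨hwi.le, hc⟩
  have hinsert : ∀ a, (fun x => exp (-a * x) * maxExpCdf w (insert i c) x) =
      fun x => exp (-a * x) * maxExpCdf w c x * (1 - exp (-(w i) * x)) := fun a => by
    funext x; rw [maxExpCdf_insert hi, mul_assoc]
  have hg : MonotoneOn (fun x => 1 - exp (-(w i) * x)) (Ioi 0) := fun x _ y _ hxy => by
    simp only [sub_le_sub_iff_left, exp_le_exp]; nlinarith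
  have hφψ : ∀ x ∈ Ioi (0 : ℝ), ∀ y ∈ Ioi (0 : ℝ), x ≤ y →
      exp (-ℓ * x) * maxExpCdf w c x * (exp (-ℓ' * y) * maxExpCdf w c y) ≤
        exp (-ℓ * y) * maxExpCdf w c y * (exp (-ℓ' * x) * maxExpCdf w c x) := by
    intro x hx y hy hxy
    have hP : 0 ≤ maxExpCdf w c x * maxExpCdf w c y :=
      mul_nonneg (maxExpCdf_mem_Icc hc (le_of_lt hx)).1 (maxExpCdf_mem_Icc hc (le_of_lt hy)).1
    calc _ = exp (-ℓ * x) * exp (-ℓ' * y) * (maxExpCdf w c x * maxExpCdf w c y) := by ring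
      _ ≤ exp (-ℓ * y) * exp (-ℓ' * x) * (maxExpCdf w c x * maxExpCdf w c y) :=
        mul_le_mul_of_nonneg_right (exp_neg_mul_mul_exp_neg_mul_le hℓℓ' hxy) hP
      _ = _ := by ring
  have key := integral_mul_integral_mul_le_of_monotoneOn measurableSet_Ioi
    (integrableOn_exp_neg_mul_maxExpCdf hc hℓ) (integrableOn_exp_neg_mul_maxExpCdf hc hℓ')
    (hinsert ℓ ▸ integrableOn_exp_neg_mul_maxExpCdf hic hℓ)
    (hinsert ℓ' ▸ integrableOn_exp_neg_mul_maxExpCdf hic hℓ') hg hφψ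
  simp only [f_eq_mul_integral, hinsert]
  nlinarith [mul_le_mul_of_nonneg_left key (mul_pos hℓ hℓ').le]
end

section
/- Decomposition of the probability that a given set occupies the k smallest ranks: for a disjoint finite family {s, {i}} with weights, and ℓ > 0, the identity ∑_{i∈s} [w(i)/(w(i)+ℓ)] · f(s∖{i}, ℓ + w(i)) = f(s, ℓ) holds, where f(s,ℓ) = ∫₀^∞ ℓ e^{-ℓx} ∏_{j∈s}(1 - e^{-w(j)x}) dx. -/
open MeasureTheory

/-!
Write `F_c(x) = e^{-cx} ∏_{j∈s} (1 - e^{-w(j)x})`, so that `f(s, ℓ) = ℓ ∫₀^∞ F_ℓ`.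
By the product rule
`F_ℓ' = ∑_{i∈s} w(i) F^{s∖{i}}_{ℓ+w(i)} - ℓ F_ℓ`,
and `F_ℓ` vanishes at `0` (as `s` is nonempty) and at `∞` (as `ℓ > 0`). Integrating over
`(0, ∞)` gives `∑_{i∈s} w(i) ∫ F^{s∖{i}}_{ℓ+w(i)} = ℓ ∫ F_ℓ`, which is the identity once
each summand is written as `w(i)/(w(i)+ℓ) · f(s∖{i}, ℓ+w(i))`.
-/

open Set Real Filter Topology

section ExpProd

variable {ι : Type*} (w : ι → ℝ)

noncomputable def expProd (s : Finset ι) (c x : ℝ) : ℝ :=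
  exp (-c * x) * ∏ j ∈ s, (1 - exp (-(w j) * x))

lemma prod_one_sub_exp_mem_Icc {s : Finset ι} (hw : ∀ j ∈ s, 0 ≤ w j) {x : ℝ} (hx : 0 ≤ x) :
    ∏ j ∈ s, (1 - exp (-(w j) * x)) ∈ Icc (0 : ℝ) 1 := by
  have hexp : ∀ j ∈ s, 0 < exp (-(w j) * x) ∧ exp (-(w j) * x) ≤ 1 := fun j hj =>
    ⟨exp_pos _, exp_le_one_iff.mpr (by nlinarith [hw j hj])⟩
  refine ⟨Finset.prod_nonneg fun j hj => ?_, Finset.prod_le_one (fun j hj => ?_) fun j hj => ?_⟩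
  all_goals linarith [hexp j hj]

lemma norm_expProd_le {s : Finset ι} (hw : ∀ j ∈ s, 0 ≤ w j) (c : ℝ) {x : ℝ} (hx : 0 ≤ x) :
    ‖expProd w s c x‖ ≤ exp (-c * x) := by
  obtain ⟨h0, h1⟩ := prod_one_sub_exp_mem_Icc w hw hx
  rw [expProd, norm_mul, norm_of_nonneg (exp_pos _).le, norm_of_nonneg h0]
  exact mul_le_of_le_one_right (exp_pos _).le h1

lemma continuous_expProd (s : Finset ι) (c : ℝ) : Continuous (expProd w s c) := by
  unfold expProd
  fun_prop

lemma expProd_zero {s : Finset ι} (hs : s.Nonempty) (c : ℝ) : expProd w s c 0 = 0 := by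
  obtain ⟨i, hi⟩ := hs
  simp [expProd, Finset.prod_eq_zero hi]

lemma integrableOn_expProd {s : Finset ι} (hw : ∀ j ∈ s, 0 ≤ w j) {c : ℝ} (hc : 0 < c) :
    IntegrableOn (expProd w s c) (Ioi 0) :=
  (exp_neg_integrableOn_Ioi 0 hc).mono' (continuous_expProd w s c).aestronglyMeasurable.restrict
    (ae_restrict_of_forall_mem measurableSet_Ioi fun _ hx =>
      (norm_expProd_le w hw c (le_of_lt hx)).trans_eq (by rw [neg_mul]))

lemma tendsto_expProd_atTop {s : Finset ι} (hw : ∀ j ∈ s, 0 ≤ w j) {c : ℝ} (hc : 0 < c) :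
    Tendsto (expProd w s c) atTop (𝓝 0) := by
  have hexp : Tendsto (fun x => exp (-c * x)) atTop (𝓝 0) :=
    tendsto_exp_atBot.comp (tendsto_id.const_mul_atTop_of_neg (neg_lt_zero.mpr hc))
  exact squeeze_zero_norm' ((eventually_ge_atTop 0).mono fun x hx => norm_expProd_le w hw c hx)
    hexp

lemma f_eq_mul_integral_expProd (s : Finset ι) (c : ℝ) :
    f w s c = c * ∫ x in Ioi 0, expProd w s c x := by
  simp only [f, expProd, mul_assoc, integral_const_mul]

variable [DecidableEq ι]

lemma hasDerivAt_expProd (s : Finset ι) (c x : ℝ) :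
    HasDerivAt (expProd w s c)
      (∑ i ∈ s, w i * expProd w (s.erase i) (c + w i) x - c * expProd w s c x) x := by
  have hexp : ∀ a : ℝ, HasDerivAt (fun x => exp (-a * x)) (-a * exp (-a * x)) x := fun a => by
    simpa [mul_comm] using ((hasDerivAt_id x).const_mul (-a)).exp
  have hprod := HasDerivAt.fun_finsetProd fun j (_ : j ∈ s) => (hexp (w j)).const_sub 1
  refine ((hexp c).fun_mul hprod).congr_deriv ?_
  have hsplit : ∀ i, exp (-(c + w i) * x) = exp (-c * x) * exp (-(w i) * x) := fun i => by
    rw [← exp_add]; ring_nf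
  simp only [expProd, hsplit, smul_eq_mul, Finset.mul_sum]
  rw [add_comm, sub_eq_add_neg]
  congr 1
  · exact Finset.sum_congr rfl fun i _ => by ring
  · ring

lemma sum_mul_integral_expProd_erase {s : Finset ι} (hs : s.Nonempty) (hw : ∀ j ∈ s, 0 ≤ w j)
    {c : ℝ} (hc : 0 < c) :
    ∑ i ∈ s, w i * ∫ x in Ioi 0, expProd w (s.erase i) (c + w i) x
      = c * ∫ x in Ioi 0, expProd w s c x := by
  have hint : ∀ i ∈ s, IntegrableOn (fun x => w i * expProd w (s.erase i) (c + w i) x) (Ioi 0) :=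
    fun i hi => (integrableOn_expProd w (fun j hj => hw j (Finset.mem_of_mem_erase hj))
      (add_pos_of_pos_of_nonneg hc (hw i hi))).const_mul (w i)
  have hsum := integrable_finsetSum s hint
  have hFTC := integral_Ioi_of_hasDerivAt_of_tendsto
    (continuous_expProd w s c).continuousWithinAt (fun x _ => hasDerivAt_expProd w s c x)
    (hsum.sub ((integrableOn_expProd w hw hc).const_mul c)) (tendsto_expProd_atTop w hw hc)
  rw [expProd_zero w hs, sub_zero, integral_sub hsum ((integrableOn_expProd w hw hc).const_mul c),
    sub_eq_zero, integral_finsetSum s hint] at hFTC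
  simpa only [integral_const_mul] using hFTC

end ExpProd

/-- Decomposition: `∑_{i∈s} (w(i)/(w(i)+ℓ)) f(s∖{i}, ℓ+w(i)) = f(s,ℓ)`. -/
theorem f_decomposition {ι : Type*} [DecidableEq ι] (w : ι → ℝ) (s : Finset ι)
    (hs : s.Nonempty) (hw : ∀ j ∈ s, 0 < w j) (ℓ : ℝ) (hℓ : 0 < ℓ) :
    ∑ i ∈ s, (w i / (w i + ℓ)) * f w (s.erase i) (ℓ + w i) = f w s ℓ := by
  calc ∑ i ∈ s, (w i / (w i + ℓ)) * f w (s.erase i) (ℓ + w i)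
      = ∑ i ∈ s, w i * ∫ x in Ioi 0, expProd w (s.erase i) (ℓ + w i) x := by
        refine Finset.sum_congr rfl fun i hi => ?_
        have hne : w i + ℓ ≠ 0 := by linarith [hw i hi]
        rw [f_eq_mul_integral_expProd, add_comm ℓ, ← mul_assoc, div_mul_cancel₀ _ hne]
    _ = f w s ℓ := by
        rw [f_eq_mul_integral_expProd,
          sum_mul_integral_expProd_erase w hs (fun j hj => (hw j hj).le) hℓ]
end

section
/- Negative covariance of subset-conditioning adjusted weights at the analytic core: for a finite set c of items with positive weights, two distinct items i, j ∉ c with weights w(i), w(j) > 0, and ℓ > 0, it holds that f(c∪{j}, ℓ) · f(c∪{i}, ℓ) ≤ f(c∪{i,j}, ℓ) · f(c, ℓ), where f(s,ℓ) = ∫₀^∞ ℓ e^{-ℓx} ∏_{h∈s}(1 - e^{-w(h)x}) dx. -/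
/-!
Write `F` for the integrand of `f w c ℓ` and `G`, `H` for the factors `1 - e^{-w(j)x}`,
`1 - e^{-w(i)x}` that adding `j`, `i` contributes. Both factors increase in `x`, so
`(G x - G y)(H x - H y) ≥ 0`, and integrating this against the nonnegative weight `F x F y`
gives `2 (∫FGH ∫F - ∫FG ∫FH) ≥ 0`: Chebyshev's integral inequality.
-/

open MeasureTheory

open Real

section Chebyshev

variable {α : Type*} [MeasurableSpace α] {μ : Measure α} {F G H : α → ℝ}

theorem integral_mul_sub_mul_sub_eq (hF : Integrable F μ)
    (hFG : Integrable (fun x => F x * G x) μ) (hFH : Integrable (fun x => F x * H x) μ)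
    (hFGH : Integrable (fun x => F x * G x * H x) μ) (y : α) :
    ∫ x, F x * ((G x - G y) * (H x - H y)) ∂μ
      = (∫ x, F x * G x * H x ∂μ) - H y * (∫ x, F x * G x ∂μ)
        - G y * (∫ x, F x * H x ∂μ) + G y * H y * ∫ x, F x ∂μ := by
  have expand : (fun x => F x * ((G x - G y) * (H x - H y))) = fun x =>
      F x * G x * H x - H y * (F x * G x) - G y * (F x * H x) + G y * H y * F x := by
    funext x; ring
  rw [expand, integral_add, integral_sub, integral_sub, integral_const_mul, integral_const_mul,
    integral_const_mul] <;> fun_prop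

theorem Monovary.integral_mul_mul_integral_le (hGH : Monovary G H) (hF0 : 0 ≤ᵐ[μ] F)
    (hF : Integrable F μ) (hFG : Integrable (fun x => F x * G x) μ)
    (hFH : Integrable (fun x => F x * H x) μ)
    (hFGH : Integrable (fun x => F x * G x * H x) μ) :
    (∫ x, F x * G x ∂μ) * (∫ x, F x * H x ∂μ)
      ≤ (∫ x, F x * G x * H x ∂μ) * ∫ x, F x ∂μ := by
  set A := ∫ x, F x * G x * H x ∂μ
  set B := ∫ x, F x * G x ∂μ
  set C := ∫ x, F x * H x ∂μ
  set D := ∫ x, F x ∂μ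
  have double_integral_nonneg :
      0 ≤ ∫ y, F y * ∫ x, F x * ((G x - G y) * (H x - H y)) ∂μ ∂μ := by
    refine integral_nonneg_of_ae (hF0.mono fun y hy => mul_nonneg hy ?_)
    exact integral_nonneg_of_ae (hF0.mono fun x hx =>
      mul_nonneg hx (hGH.sub_mul_sub_nonneg y x))
  have expand : (fun y => F y * ∫ x, F x * ((G x - G y) * (H x - H y)) ∂μ) = fun y =>
      A * F y - B * (F y * H y) - C * (F y * G y) + D * (F y * G y * H y) := by
    funext y
    rw [integral_mul_sub_mul_sub_eq hF hFG hFH hFGH]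
    ring
  rw [expand, integral_add, integral_sub, integral_sub, integral_const_mul, integral_const_mul,
    integral_const_mul, integral_const_mul] at double_integral_nonneg
  · linarith
  all_goals fun_prop

end Chebyshev

section OneSubExpNeg

variable {a x : ℝ}

theorem monotone_one_sub_exp_neg_mul (ha : 0 ≤ a) : Monotone fun x => 1 - exp (-a * x) :=
  fun _ _ hxy => sub_le_sub_left (exp_le_exp.2 (by nlinarith)) 1

theorem one_sub_exp_neg_mul_nonneg (ha : 0 ≤ a) (hx : 0 ≤ x) : 0 ≤ 1 - exp (-a * x) :=
  sub_nonneg.2 (exp_le_one_iff.2 (by nlinarith))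

theorem one_sub_exp_neg_mul_le_one : 1 - exp (-a * x) ≤ 1 :=
  sub_le_self 1 (exp_pos _).le

end OneSubExpNeg

section Integrand

variable {ι : Type*} {w : ι → ℝ} {s : Finset ι} {ℓ x : ℝ}

noncomputable def fIntegrand (w : ι → ℝ) (s : Finset ι) (ℓ x : ℝ) : ℝ :=
  ℓ * exp (-ℓ * x) * ∏ h ∈ s, (1 - exp (-(w h) * x))

theorem f_eq_integral_fIntegrand : f w s ℓ = ∫ x in Set.Ioi 0, fIntegrand w s ℓ x := rfl

theorem fIntegrand_insert [DecidableEq ι] {i : ι} (hi : i ∉ s) :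
    fIntegrand w (insert i s) ℓ = fun x => fIntegrand w s ℓ x * (1 - exp (-w i * x)) := by
  funext x
  rw [fIntegrand, fIntegrand, Finset.prod_insert hi]
  ring

theorem fIntegrand_nonneg (hw : ∀ h ∈ s, 0 ≤ w h) (hℓ : 0 ≤ ℓ) (hx : 0 ≤ x) :
    0 ≤ fIntegrand w s ℓ x :=
  mul_nonneg (by positivity) (Finset.prod_nonneg fun h hh =>
    one_sub_exp_neg_mul_nonneg (hw h hh) hx)

theorem integrableOn_fIntegrand (hw : ∀ h ∈ s, 0 ≤ w h) (hℓ : 0 < ℓ) :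
    IntegrableOn (fIntegrand w s ℓ) (Set.Ioi 0) := by
  refine Integrable.mono' ((exp_neg_integrableOn_Ioi 0 hℓ).const_mul ℓ)
    (Continuous.aestronglyMeasurable (by unfold fIntegrand; fun_prop)) ?_
  filter_upwards [ae_restrict_mem measurableSet_Ioi] with x (hx : 0 < x)
  have prod_le_one : ∏ h ∈ s, (1 - exp (-(w h) * x)) ≤ 1 :=
    Finset.prod_le_one (fun h hh => one_sub_exp_neg_mul_nonneg (hw h hh) hx.le)
      fun h _ => one_sub_exp_neg_mul_le_one
  rw [Real.norm_of_nonneg (fIntegrand_nonneg hw hℓ.le hx.le), fIntegrand]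
  exact mul_le_of_le_one_right (by positivity) prod_le_one

end Integrand

/-- Analytic core of the negative covariance of subset-conditioning adjusted weights:
`f(c∪{j},ℓ) ⬝ f(c∪{i},ℓ) ≤ f(c∪{i,j},ℓ) ⬝ f(c,ℓ)`. -/
theorem f_neg_cov {ι : Type*} [DecidableEq ι] (w : ι → ℝ) (c : Finset ι)
    (hw : ∀ h ∈ c, 0 < w h) (i j : ι) (hij : i ≠ j) (hi : i ∉ c) (hj : j ∉ c)
    (hwi : 0 < w i) (hwj : 0 < w j) (ℓ : ℝ) (hℓ : 0 < ℓ) :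
    f w (insert j c) ℓ * f w (insert i c) ℓ ≤ f w (insert i (insert j c)) ℓ * f w c ℓ := by
  have hwc : ∀ h ∈ c, 0 ≤ w h := fun h hh => (hw h hh).le
  have hwjc : ∀ h ∈ insert j c, 0 ≤ w h := Finset.forall_mem_insert _ _ _ |>.2 ⟨hwj.le, hwc⟩
  have hwic : ∀ h ∈ insert i c, 0 ≤ w h := Finset.forall_mem_insert _ _ _ |>.2 ⟨hwi.le, hwc⟩
  have hwijc : ∀ h ∈ insert i (insert j c), 0 ≤ w h :=
    Finset.forall_mem_insert _ _ _ |>.2 ⟨hwi.le, hwjc⟩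
  have hi' : i ∉ insert j c := by simp [hij, hi]
  have hFG := integrableOn_fIntegrand hwjc hℓ
  have hFH := integrableOn_fIntegrand hwic hℓ
  have hFGH := integrableOn_fIntegrand hwijc hℓ
  simp only [f_eq_integral_fIntegrand]
  rw [fIntegrand_insert hi'] at hFGH ⊢
  rw [fIntegrand_insert hj] at hFG hFGH ⊢
  rw [fIntegrand_insert hi] at hFH ⊢
  exact ((monotone_one_sub_exp_neg_mul hwj.le).monovary
    (monotone_one_sub_exp_neg_mul hwi.le)).integral_mul_mul_integral_le
    ((ae_restrict_mem measurableSet_Ioi).mono fun x hx => fIntegrand_nonneg hwc hℓ.le hx.le)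
    (integrableOn_fIntegrand hwc hℓ) hFG hFH hFGH
end
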